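/- arXiv:2406.13277 — 2 statements merged into one kernel-verified Lean document; each statement's English description precedes it below -/
import Mathlib

section
/- If the vertex boundary δM of a minimal subgraph M⊂ℤ² contains a simple closed loop (cycle), then that loop is a unit square, i.e. a 4-cycle. -/
open Set

/-- Vertices of the integer lattice `ℤⁿ`. -/
abbrev Vtx (n : ℕ) := Fin n → ℤ

/-- Adjacency in the integer lattice: Euclidean (equivalently ℓ¹) distance one. -/
def ZAdj {n : ℕ} (x y : Vtx n) : Prop := (∑ i, (x i - y i).natAbs) = 1

/-- Exterior vertex boundary. -/
def extB {n : ℕ} (Ω : Set (Vtx n)) : Set (Vtx n) := {z | z ∉ Ω ∧ ∃ w ∈ Ω, ZAdj z w}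

/-- Closure `Ω̄ = Ω ∪ τΩ`. -/
def clos {n : ℕ} (Ω : Set (Vtx n)) : Set (Vtx n) := Ω ∪ extB Ω

/-- Directed version of `E_Ω = E(Ω, Ω̄)`. -/
def dirE {n : ℕ} (Ω : Set (Vtx n)) : Set (Vtx n × Vtx n) :=
  {p | ZAdj p.1 p.2 ∧ p.1 ∈ clos Ω ∧ p.2 ∈ clos Ω ∧ (p.1 ∈ Ω ∨ p.2 ∈ Ω)}

/-- Directed edge boundary of `F`; each undirected boundary edge is counted once. -/
def dirBdry {n : ℕ} (F : Set (Vtx n)) : Set (Vtx n × Vtx n) :=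
  {p | ZAdj p.1 p.2 ∧ p.1 ∈ F ∧ p.2 ∉ F}

/-- `M ⊆ ℤⁿ` is a minimal (area-minimizing) subgraph. -/
def IsMinimal {n : ℕ} (M : Set (Vtx n)) : Prop :=
  ∀ Ω : Set (Vtx n), Ω.Finite → ∀ F : Set (Vtx n), symmDiff F M ⊆ Ω →
    (dirBdry M ∩ dirE Ω).ncard ≤ (dirBdry F ∩ dirE Ω).ncard

/-- Vertex boundary `δM`. -/
def vB {n : ℕ} (M : Set (Vtx n)) : Set (Vtx n) := {x | x ∈ M ∧ ∃ y, y ∉ M ∧ ZAdj x y}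

/-- Degree of `x` in the subgraph induced on `M`. -/
noncomputable def degIn {n : ℕ} (M : Set (Vtx n)) (x : Vtx n) : ℕ :=
  ({y | y ∈ M ∧ ZAdj x y}).ncard

/-- Combinatorial (graph) distance in `ℤⁿ`, which equals the ℓ¹ distance. -/
def latDist {n : ℕ} (x y : Vtx n) : ℕ := ∑ i, (x i - y i).natAbs

/-- The ∞-normed ball `B̂_r(x)`. -/
def Bhat {n : ℕ} (x : Vtx n) (r : ℕ) : Set (Vtx n) := {y | ∀ i, (y i - x i).natAbs ≤ r}

/-- The set of vertices of `M` lying in some unit `n`-cube all of whose vertices are in `M`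
(the vertices of the `n`-skeleton `Mⁿ`). -/
def skel {n : ℕ} (M : Set (Vtx n)) : Set (Vtx n) :=
  {x | x ∈ M ∧ ∃ v : Vtx n, (∀ i, x i = v i ∨ x i = v i + 1) ∧
    ∀ y : Vtx n, (∀ i, y i = v i ∨ y i = v i + 1) → y ∈ M}

set_option linter.unusedSectionVars false

section Basics

lemma vext {v w : Vtx 2} (h0 : v 0 = w 0) (h1 : v 1 = w 1) : v = w := by
  funext j; fin_cases j <;> assumption

lemma zadj_iff {v w : Vtx 2} : ZAdj v w ↔
    ((v 0 = w 0 ∧ (v 1 = w 1 + 1 ∨ v 1 = w 1 - 1)) ∨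
     (v 1 = w 1 ∧ (v 0 = w 0 + 1 ∨ v 0 = w 0 - 1))) := by
  unfold ZAdj; rw [Fin.sum_univ_two]; omega

lemma zadj_symm {v w : Vtx 2} (h : ZAdj v w) : ZAdj w v := by
  rw [zadj_iff] at h ⊢; omega

lemma nbrs_finite (w : Vtx 2) : {z : Vtx 2 | ZAdj z w}.Finite := by
  refine Set.Finite.subset (Set.toFinite
    ({![w 0 + 1, w 1], ![w 0 - 1, w 1], ![w 0, w 1 + 1], ![w 0, w 1 - 1]} : Set (Vtx 2))) ?_
  intro z hz
  rcases zadj_iff.1 hz with ⟨h0, h1 | h1⟩ | ⟨h1, h0 | h0⟩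
  · exact Or.inr (Or.inr (Or.inl (vext (by simp [h0]) (by simp [h1]))))
  · exact Or.inr (Or.inr (Or.inr (vext (by simp [h0]) (by simp [h1]))))
  · exact Or.inl (vext (by simp [h0]) (by simp [h1]))
  · exact Or.inr (Or.inl (vext (by simp [h0]) (by simp [h1])))

lemma extB_finite {Ω : Set (Vtx 2)} (h : Ω.Finite) : (extB Ω).Finite := by
  refine Set.Finite.subset (Set.Finite.biUnion h (fun w _ => nbrs_finite w)) ?_
  rintro z ⟨hz, w, hw, hadj⟩
  exact Set.mem_biUnion hw hadj

lemma clos_finite {Ω : Set (Vtx 2)} (h : Ω.Finite) : (clos Ω).Finite :=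
  h.union (extB_finite h)

lemma dirE_finite {Ω : Set (Vtx 2)} (h : Ω.Finite) : (dirE Ω).Finite := by
  refine Set.Finite.subset ((clos_finite h).prod (clos_finite h)) ?_
  rintro ⟨a, b⟩ ⟨_, h1, h2, _⟩
  exact ⟨h1, h2⟩

lemma box_finite (c d : ℤ) : {v : Vtx 2 | v 0 ∈ Set.Icc c d ∧ v 1 ∈ Set.Icc c d}.Finite := by
  have : {v : Vtx 2 | v 0 ∈ Set.Icc c d ∧ v 1 ∈ Set.Icc c d} =
      (finTwoArrowEquiv ℤ) ⁻¹' ((Set.Icc c d) ×ˢ (Set.Icc c d)) := by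
    ext v; simp [finTwoArrowEquiv]; tauto
  rw [this]
  exact Set.Finite.preimage ((finTwoArrowEquiv ℤ).injective.injOn)
    ((Set.finite_Icc c d).prod (Set.finite_Icc c d))


lemma mem_four {c v : Vtx 2} (h : ZAdj v c) :
    v ∈ ({![c 0, c 1 + 1], ![c 0, c 1 - 1], ![c 0 + 1, c 1], ![c 0 - 1, c 1]} :
      Finset (Vtx 2)) := by
  simp only [Finset.mem_insert, Finset.mem_singleton]
  rcases zadj_iff.1 h with ⟨h0, h1 | h1⟩ | ⟨h1, h0 | h0⟩
  · exact Or.inl (vext (by simp [h0]) (by simp [h1]))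
  · exact Or.inr (Or.inl (vext (by simp [h0]) (by simp [h1])))
  · exact Or.inr (Or.inr (Or.inl (vext (by simp [h0]) (by simp [h1]))))
  · exact Or.inr (Or.inr (Or.inr (vext (by simp [h0]) (by simp [h1]))))

lemma five_nbrs {c v1 v2 v3 v4 v5 : Vtx 2}
    (h1 : ZAdj v1 c) (h2 : ZAdj v2 c) (h3 : ZAdj v3 c) (h4 : ZAdj v4 c) (h5 : ZAdj v5 c)
    (d12 : v1 ≠ v2) (d13 : v1 ≠ v3) (d14 : v1 ≠ v4) (d15 : v1 ≠ v5)
    (d23 : v2 ≠ v3) (d24 : v2 ≠ v4) (d25 : v2 ≠ v5)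
    (d34 : v3 ≠ v4) (d35 : v3 ≠ v5) (d45 : v4 ≠ v5) : False := by
  classical
  set T : Finset (Vtx 2) :=
    {![c 0, c 1 + 1], ![c 0, c 1 - 1], ![c 0 + 1, c 1], ![c 0 - 1, c 1]} with hT
  have hsub : ({v1, v2, v3, v4, v5} : Finset (Vtx 2)) ⊆ T := by
    intro z hz
    simp only [Finset.mem_insert, Finset.mem_singleton] at hz
    rcases hz with rfl | rfl | rfl | rfl | rfl
    exacts [mem_four h1, mem_four h2, mem_four h3, mem_four h4, mem_four h5]
  have hcard5 : ({v1, v2, v3, v4, v5} : Finset (Vtx 2)).card = 5 := by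
    rw [Finset.card_insert_of_notMem (by simp [d12, d13, d14, d15]),
        Finset.card_insert_of_notMem (by simp [d23, d24, d25]),
        Finset.card_insert_of_notMem (by simp [d34, d35]),
        Finset.card_insert_of_notMem (by simp [d45]),
        Finset.card_singleton]
  have hcard4 : T.card ≤ 4 := by
    rw [hT]
    refine le_trans (Finset.card_insert_le _ _) ?_
    have := Finset.card_insert_le ![c 0, c 1 - 1] ({![c 0 + 1, c 1], ![c 0 - 1, c 1]} : Finset (Vtx 2))
    have := Finset.card_insert_le ![c 0 + 1, c 1] ({![c 0 - 1, c 1]} : Finset (Vtx 2))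
    simp_all
    omega
  have := Finset.card_le_card hsub
  omega

end Basics

section Wind
variable {k : ℕ} [NeZero k]

def wind (x : ZMod k → Vtx 2) (a b : ℤ) : ℤ :=
  ∑ i : ZMod k,
    ((if a < x i 0 ∧ x i 1 = b ∧ x (i+1) 0 = x i 0 ∧ x (i+1) 1 = x i 1 + 1 then (1:ℤ) else 0)
   - (if a < x i 0 ∧ x i 1 = b + 1 ∧ x (i+1) 0 = x i 0 ∧ x (i+1) 1 = x i 1 - 1 then (1:ℤ) else 0))

def colS (x : ZMod k → Vtx 2) (a h : ℤ) : ℤ :=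
  ∑ i : ZMod k,
    ((if x i 0 = a + 1 ∧ h ≤ x i 1 ∧ x (i+1) 0 = x i 0 - 1 ∧ x (i+1) 1 = x i 1 then (1:ℤ) else 0)
   - (if x i 0 = a ∧ h ≤ x i 1 ∧ x (i+1) 0 = x i 0 + 1 ∧ x (i+1) 1 = x i 1 then (1:ℤ) else 0))

variable (x : ZMod k → Vtx 2)

lemma step_cases (i : ZMod k) (h : ZAdj (x i) (x (i+1))) :
    (x (i+1) 0 = x i 0 ∧ x (i+1) 1 = x i 1 + 1) ∨
    (x (i+1) 0 = x i 0 ∧ x (i+1) 1 = x i 1 - 1) ∨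
    (x (i+1) 0 = x i 0 + 1 ∧ x (i+1) 1 = x i 1) ∨
    (x (i+1) 0 = x i 0 - 1 ∧ x (i+1) 1 = x i 1) := by
  rw [zadj_iff] at h; omega

lemma telescope (f : Vtx 2 → ℤ) : ∑ i : ZMod k, (f (x (i+1)) - f (x i)) = 0 := by
  rw [Finset.sum_sub_distrib]
  rw [show ∑ i : ZMod k, f (x (i+1)) = ∑ i : ZMod k, f (x i) from
    Fintype.sum_equiv (Equiv.addRight 1) _ _ (fun i => rfl)]
  ring

lemma quadrant_identity (hadj : ∀ i, ZAdj (x i) (x (i+1))) (a b : ℤ) :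
    wind x a b = colS x a (b+1) := by
  have key : wind x a b - colS x a (b+1) =
      ∑ i : ZMod k, ((fun v : Vtx 2 => if b + 1 ≤ v 1 ∧ a < v 0 then (1:ℤ) else 0) (x (i+1))
        - (fun v : Vtx 2 => if b + 1 ≤ v 1 ∧ a < v 0 then (1:ℤ) else 0) (x i)) := by
    unfold wind colS
    rw [← Finset.sum_sub_distrib]
    refine Finset.sum_congr rfl (fun i _ => ?_)
    rcases step_cases x i (hadj i) with h | h | h | h <;> simp only <;> split_ifs <;> omega
  have := telescope x (fun v : Vtx 2 => if b + 1 ≤ v 1 ∧ a < v 0 then (1:ℤ) else 0)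
  rw [this] at key
  linarith

lemma wind_sub_horiz (a b : ℤ) :
    wind x a b - wind x (a+1) b =
    ∑ i : ZMod k,
      ((if x i 0 = a + 1 ∧ x i 1 = b ∧ x (i+1) 0 = x i 0 ∧ x (i+1) 1 = x i 1 + 1 then (1:ℤ) else 0)
     - (if x i 0 = a + 1 ∧ x i 1 = b + 1 ∧ x (i+1) 0 = x i 0 ∧ x (i+1) 1 = x i 1 - 1 then (1:ℤ) else 0)) := by
  unfold wind
  rw [← Finset.sum_sub_distrib]
  refine Finset.sum_congr rfl (fun i _ => ?_)
  split_ifs <;> omega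

lemma wind_sub_vert (hadj : ∀ i, ZAdj (x i) (x (i+1))) (a b : ℤ) :
    wind x a b - wind x a (b+1) =
    ∑ i : ZMod k,
      ((if x i 0 = a + 1 ∧ x i 1 = b + 1 ∧ x (i+1) 0 = x i 0 - 1 ∧ x (i+1) 1 = x i 1 then (1:ℤ) else 0)
     - (if x i 0 = a ∧ x i 1 = b + 1 ∧ x (i+1) 0 = x i 0 + 1 ∧ x (i+1) 1 = x i 1 then (1:ℤ) else 0)) := by
  rw [quadrant_identity x hadj a b, quadrant_identity x hadj a (b+1)]
  unfold colS
  rw [← Finset.sum_sub_distrib]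
  refine Finset.sum_congr rfl (fun i _ => ?_)
  split_ifs <;> omega

def offC (x : ZMod k → Vtx 2) (a b : ℤ) : Prop := ∀ j, ¬(x j 0 = a ∧ x j 1 = b)

lemma W1r (a b : ℤ) (h : offC x (a+1) b) : wind x (a+1) b = wind x a b := by
  have := wind_sub_horiz x a b
  rw [Finset.sum_eq_zero (fun i _ => ?_)] at this
  · linarith
  · have h1 := h i
    have h2 := h (i+1)
    split_ifs <;> omega

lemma W2u (hadj : ∀ i, ZAdj (x i) (x (i+1))) (a b : ℤ) (h : offC x a (b+1)) :
    wind x a (b+1) = wind x a b := by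
  have := wind_sub_vert x hadj a b
  rw [Finset.sum_eq_zero (fun i _ => ?_)] at this
  · linarith
  · have h1 := h i
    have h2 := h (i+1)
    split_ifs <;> omega

lemma wind_far_right (a b : ℤ) (h : ∀ i, x i 0 ≤ a) : wind x a b = 0 := by
  unfold wind
  refine Finset.sum_eq_zero (fun i _ => ?_)
  have := h i
  split_ifs <;> omega

lemma wind_far_up (a b : ℤ) (h : ∀ i, x i 1 ≤ b) : wind x a b = 0 := by
  unfold wind
  refine Finset.sum_eq_zero (fun i _ => ?_)
  have h1 := h i
  have h2 := h (i+1)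
  split_ifs <;> omega

lemma wind_far_down (a b : ℤ) (h : ∀ i, b + 1 ≤ x i 1) : wind x a b = 0 := by
  unfold wind
  refine Finset.sum_eq_zero (fun i _ => ?_)
  have h1 := h i
  have h2 := h (i+1)
  split_ifs <;> omega

lemma wind_far_left (hadj : ∀ i, ZAdj (x i) (x (i+1))) (a b : ℤ)
    (h : ∀ i, a + 2 ≤ x i 0) : wind x a b = 0 := by
  rw [quadrant_identity x hadj a b]
  refine Finset.sum_eq_zero (fun i _ => ?_)
  have := h i
  split_ifs <;> omega

def IntS (x : ZMod k → Vtx 2) : Set (Vtx 2) :=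
  {v | offC x (v 0) (v 1) ∧ wind x (v 0) (v 1) ≠ 0}

def Rb (x : ZMod k → Vtx 2) : ℕ :=
  Finset.univ.sup (fun i : ZMod k => (x i 0).natAbs ⊔ (x i 1).natAbs)

lemma bnd0 (i : ZMod k) : (x i 0).natAbs ≤ Rb x := by
  have h := Finset.le_sup (f := fun i : ZMod k => (x i 0).natAbs ⊔ (x i 1).natAbs)
    (Finset.mem_univ i)
  exact le_trans le_sup_left h

lemma bnd1 (i : ZMod k) : (x i 1).natAbs ≤ Rb x := by
  have h := Finset.le_sup (f := fun i : ZMod k => (x i 0).natAbs ⊔ (x i 1).natAbs)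
    (Finset.mem_univ i)
  exact le_trans le_sup_right h

lemma wind_ne_bounds (hadj : ∀ i, ZAdj (x i) (x (i+1))) (a b : ℤ)
    (h : wind x a b ≠ 0) :
    a < (Rb x : ℤ) ∧ -(Rb x : ℤ) - 2 < a ∧ b < (Rb x : ℤ) ∧ -(Rb x : ℤ) - 1 < b := by
  have hb0 : ∀ i, x i 0 ≤ (Rb x : ℤ) ∧ -(Rb x : ℤ) ≤ x i 0 := by
    intro i; have := bnd0 x i; omega
  have hb1 : ∀ i, x i 1 ≤ (Rb x : ℤ) ∧ -(Rb x : ℤ) ≤ x i 1 := by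
    intro i; have := bnd1 x i; omega
  refine ⟨?_, ?_, ?_, ?_⟩
  · by_contra hc
    exact h (wind_far_right x a b (fun i => by have := hb0 i; omega))
  · by_contra hc
    exact h (wind_far_left x hadj a b (fun i => by have := hb0 i; omega))
  · by_contra hc
    exact h (wind_far_up x a b (fun i => by have := hb1 i; omega))
  · by_contra hc
    exact h (wind_far_down x a b (fun i => by have := hb1 i; omega))

lemma IntS_finite (hadj : ∀ i, ZAdj (x i) (x (i+1))) : (IntS x).Finite := by
  refine Set.Finite.subset (box_finite (-(Rb x : ℤ) - 2) ((Rb x : ℤ) + 2)) ?_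
  rintro v ⟨_, hw⟩
  have := wind_ne_bounds x hadj (v 0) (v 1) hw
  simp only [Set.mem_setOf_eq, Set.mem_Icc]
  omega

lemma offC_iff (a : Vtx 2) : offC x (a 0) (a 1) ↔ a ∉ Set.range x := by
  constructor
  · rintro h ⟨j, rfl⟩
    exact h j ⟨rfl, rfl⟩
  · rintro h j ⟨h0, h1⟩
    exact h ⟨j, vext h0 h1⟩

lemma adj_wind_eq (hadj : ∀ i, ZAdj (x i) (x (i+1))) {a b : Vtx 2} (hab : ZAdj a b)
    (ha : offC x (a 0) (a 1)) (hb : offC x (b 0) (b 1)) :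
    wind x (a 0) (a 1) = wind x (b 0) (b 1) := by
  rcases zadj_iff.1 hab with ⟨h0, h1 | h1⟩ | ⟨h1, h0 | h0⟩
  · rw [h0, h1]
    rw [h0, h1] at ha
    exact W2u x hadj (b 0) (b 1) ha
  · have h1' : b 1 = a 1 + 1 := by omega
    have hb' : offC x (a 0) (a 1 + 1) := by rw [h0, ← h1']; exact hb
    have hW := W2u x hadj (a 0) (a 1) hb'
    rw [h1', ← h0]
    exact hW.symm
  · rw [h1, h0]
    rw [h1, h0] at ha
    exact W1r x (b 0) (b 1) ha
  · have h0' : b 0 = a 0 + 1 := by omega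
    have hb' : offC x (a 0 + 1) (a 1) := by rw [h1, ← h0']; exact hb
    have hW := W1r x (a 0) (a 1) hb'
    rw [h0', ← h1]
    exact hW.symm

end Wind

section Min
variable {k : ℕ} [NeZero k] (x : ZMod k → Vtx 2) (M : Set (Vtx 2))

theorem intS_subset_M (hM : IsMinimal M) (hadj : ∀ i, ZAdj (x i) (x (i+1)))
    (hCM : ∀ i, x i ∈ M) : IntS x ⊆ M := by
  have hfin := IntS_finite x hadj
  have hsymm : symmDiff (M ∪ IntS x) M ⊆ IntS x := by
    intro v hv
    rcases Set.mem_symmDiff.1 hv with ⟨hv1, hv2⟩ | ⟨hv1, hv2⟩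
    · rcases hv1 with h | h
      · exact absurd h hv2
      · exact h
    · exact absurd (Or.inl hv1) hv2
  have hmin := hM (IntS x) hfin (M ∪ IntS x) hsymm
  have hRHS : dirBdry (M ∪ IntS x) ∩ dirE (IntS x) = ∅ := by
    ext p
    simp only [Set.mem_inter_iff, Set.mem_empty_iff_false, iff_false]
    rintro ⟨⟨hadj1, h1, h2⟩, _, hc1, hc2, h5⟩
    have hp1 : p.1 ∈ IntS x := by
      rcases h5 with h | h
      · exact h
      · exact absurd (Or.inr h) h2
    have hp2C : offC x (p.2 0) (p.2 1) := by
      rw [offC_iff]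
      rintro ⟨j, hj⟩
      exact h2 (Or.inl (hj ▸ hCM j))
    exact h2 (Or.inr ⟨hp2C,
      by rw [← adj_wind_eq x hadj hadj1 hp1.1 hp2C]; exact hp1.2⟩)
  rw [hRHS] at hmin
  simp only [Set.ncard_empty, Nat.le_zero] at hmin
  have hLHSfin : (dirBdry M ∩ dirE (IntS x)).Finite :=
    Set.Finite.subset (dirE_finite hfin) Set.inter_subset_right
  have hLHS : dirBdry M ∩ dirE (IntS x) = ∅ := by
    rw [← Set.ncard_eq_zero hLHSfin]; omega
  have key : ∀ n : ℕ, ∀ v : Vtx 2, v ∈ IntS x → ((Rb x : ℤ) - v 0).toNat ≤ n → v ∈ M := by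
    intro n
    induction n with
    | zero =>
      intro v hv h0
      have hb := wind_ne_bounds x hadj (v 0) (v 1) hv.2
      omega
    | succ n ih =>
      intro v hv hn
      have hb := wind_ne_bounds x hadj (v 0) (v 1) hv.2
      set w : Vtx 2 := ![v 0 + 1, v 1] with hwdef
      have hw0 : w 0 = v 0 + 1 := rfl
      have hw1 : w 1 = v 1 := rfl
      have hadjwv : ZAdj w v := by rw [zadj_iff, hw0, hw1]; omega
      have hwM : w ∈ M := by
        by_cases hoff : offC x (v 0 + 1) (v 1)
        · have hwind : wind x (v 0 + 1) (v 1) = wind x (v 0) (v 1) :=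
            W1r x (v 0) (v 1) hoff
          have hwInt : w ∈ IntS x :=
            ⟨by rw [hw0, hw1]; exact hoff, by rw [hw0, hw1, hwind]; exact hv.2⟩
          exact ih w hwInt (by rw [hw0]; omega)
        · unfold offC at hoff
          push_neg at hoff
          obtain ⟨j, hj0, hj1⟩ := hoff
          have : x j = w := vext (by rw [hw0, hj0]) (by rw [hw1, hj1])
          exact this ▸ hCM j
      by_contra hvM
      have hmem : (w, v) ∈ dirBdry M ∩ dirE (IntS x) := by
        refine ⟨⟨hadjwv, hwM, hvM⟩, hadjwv, ?_, Or.inl hv, Or.inr hv⟩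
        by_cases hwI : w ∈ IntS x
        · exact Or.inl hwI
        · exact Or.inr ⟨hwI, v, hv, hadjwv⟩
      rw [hLHS] at hmem
      exact hmem
  intro v hv
  exact key ((Rb x : ℤ) - v 0).toNat v hv le_rfl


lemma zmod_two_ne_zero (hk : 3 ≤ k) : (2 : ZMod k) ≠ 0 := by
  intro h
  have h2 : ((2 : ℕ) : ZMod k) = 0 := by exact_mod_cast h
  have := (ZMod.natCast_eq_zero_iff 2 k).1 h2
  have := Nat.le_of_dvd (by norm_num) this
  omega

lemma loopnbr_ne (hk : 3 ≤ k) (hinj : Function.Injective x) (j : ZMod k) :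
    x (j+1) ≠ x (j-1) := by
  intro h
  have h1 := hinj h
  have h2 : (2 : ZMod k) = 0 := by
    rw [show (2 : ZMod k) = (j+1) - (j-1) by ring, h1, sub_self]
  exact zmod_two_ne_zero hk h2

lemma hadj_pred (hadj : ∀ i, ZAdj (x i) (x (i+1))) (j : ZMod k) :
    ZAdj (x (j-1)) (x j) := by
  have := hadj (j-1)
  rwa [show j - 1 + 1 = j by ring] at this

theorem no_free_int (hM : IsMinimal M) (hk : 3 ≤ k) (hinj : Function.Injective x)
    (hadj : ∀ i, ZAdj (x i) (x (i+1))) (hbd : ∀ i, x i ∈ vB M) :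
    ∀ (a : Vtx 2) (j : ZMod k), ZAdj a (x j) → a ∉ IntS x := by
  have hCM : ∀ i, x i ∈ M := fun i => (hbd i).1
  have hIntM := intS_subset_M x M hM hadj hCM
  choose y hy using fun i => (hbd i).2
  by_contra hcon
  push_neg at hcon
  obtain ⟨a0, j0, hadj0, ha0⟩ := hcon
  set Ω : Set (Vtx 2) := IntS x ∪ Set.range x with hΩdef
  have hΩfin : Ω.Finite := (IntS_finite x hadj).union (Set.finite_range x)
  have hΩM : Ω ⊆ M := by
    rintro v (hv | ⟨i, rfl⟩)
    · exact hIntM hv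
    · exact hCM i
  set F : Set (Vtx 2) := M \ Ω with hFdef
  have hsymm : symmDiff F M ⊆ Ω := by
    intro v hv
    rcases Set.mem_symmDiff.1 hv with ⟨hv1, hv2⟩ | ⟨hv1, hv2⟩
    · exact absurd hv1.1 hv2
    · by_contra hvΩ
      exact hv2 ⟨hv1, hvΩ⟩
  have hmin := hM Ω hΩfin F hsymm
  -- structure of the boundary edges of F within E_Ω
  have hstruct : ∀ p ∈ dirBdry F ∩ dirE Ω,
      p.1 ∈ M ∧ p.1 ∉ Ω ∧ ∃ j, p.2 = x j ∧ ZAdj p.1 (x j) ∧ j ≠ j0 := by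
    rintro p ⟨⟨hadjp, haF, hbF⟩, _, hc1, hc2, hor⟩
    have haM : p.1 ∈ M := haF.1
    have haΩ : p.1 ∉ Ω := haF.2
    have hbΩ : p.2 ∈ Ω := by
      rcases hor with h | h
      · exact absurd h haΩ
      · exact h
    have haC : offC x (p.1 0) (p.1 1) := by
      rw [offC_iff]; intro hr; exact haΩ (Or.inr hr)
    rcases hbΩ with hbI | ⟨j, hj⟩
    · exfalso
      have : p.1 ∈ IntS x :=
        ⟨haC, by rw [adj_wind_eq x hadj hadjp haC hbI.1]; exact hbI.2⟩
      exact haΩ (Or.inl this)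
    · refine ⟨haM, haΩ, j, hj.symm, by rw [hj]; exact hadjp, ?_⟩
      rintro rfl
      refine five_nbrs (c := x j) (v1 := p.1) (v2 := a0) (v3 := y j)
        (v4 := x (j+1)) (v5 := x (j-1))
        (by rw [hj]; exact hadjp) hadj0 (zadj_symm (hy j).2)
        (zadj_symm (hadj j)) (hadj_pred x hadj j)
        ?_ ?_ ?_ ?_ ?_ ?_ ?_ ?_ ?_ (loopnbr_ne x hk hinj j)
      · intro h; exact haΩ (Or.inl (h ▸ ha0))
      · intro h; exact (hy j).1 (h ▸ haM)
      · intro h; exact haΩ (Or.inr (h ▸ Set.mem_range_self (j+1)))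
      · intro h; exact haΩ (Or.inr (h ▸ Set.mem_range_self (j-1)))
      · intro h; exact (hy j).1 (h ▸ hIntM ha0)
      · intro h
        exact ((offC_iff x a0).1 ha0.1) (h ▸ Set.mem_range_self (j+1))
      · intro h
        exact ((offC_iff x a0).1 ha0.1) (h ▸ Set.mem_range_self (j-1))
      · intro h; exact (hy j).1 (h.symm ▸ hCM (j+1))
      · intro h; exact (hy j).1 (h.symm ▸ hCM (j-1))
  have huniq : ∀ (j : ZMod k) (a a' : Vtx 2), a ∈ M → a ∉ Ω → ZAdj a (x j) →
      a' ∈ M → a' ∉ Ω → ZAdj a' (x j) → a = a' := by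
    intro j a a' haM haΩ haj ha'M ha'Ω ha'j
    by_contra hne
    refine five_nbrs (c := x j) (v1 := a) (v2 := a') (v3 := y j)
      (v4 := x (j+1)) (v5 := x (j-1)) haj ha'j (zadj_symm (hy j).2)
      (zadj_symm (hadj j)) (hadj_pred x hadj j)
      hne ?_ ?_ ?_ ?_ ?_ ?_ ?_ ?_ (loopnbr_ne x hk hinj j)
    · intro h; exact (hy j).1 (h ▸ haM)
    · intro h; exact haΩ (Or.inr (h ▸ Set.mem_range_self (j+1)))
    · intro h; exact haΩ (Or.inr (h ▸ Set.mem_range_self (j-1)))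
    · intro h; exact (hy j).1 (h ▸ ha'M)
    · intro h; exact ha'Ω (Or.inr (h ▸ Set.mem_range_self (j+1)))
    · intro h; exact ha'Ω (Or.inr (h ▸ Set.mem_range_self (j-1)))
    · intro h; exact (hy j).1 (h.symm ▸ hCM (j+1))
    · intro h; exact (hy j).1 (h.symm ▸ hCM (j-1))
  -- lower bound on the boundary of M
  set φ : ZMod k → Vtx 2 × Vtx 2 := fun i => (x i, y i) with hφdef
  have hφinj : Function.Injective φ := fun i j h => hinj (congrArg Prod.fst h)
  have hφmem : ∀ i, φ i ∈ dirBdry M ∩ dirE Ω := by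
    intro i
    refine ⟨⟨(hy i).2, hCM i, (hy i).1⟩, (hy i).2, Or.inl (Or.inr ⟨i, rfl⟩), ?_,
      Or.inl (Or.inr ⟨i, rfl⟩)⟩
    exact Or.inr ⟨fun hyΩ => (hy i).1 (hΩM hyΩ), x i, Or.inr ⟨i, rfl⟩,
      zadj_symm (hy i).2⟩
  have hLHSfin : (dirBdry M ∩ dirE Ω).Finite :=
    Set.Finite.subset (dirE_finite hΩfin) Set.inter_subset_right
  have hLHScard : k ≤ (dirBdry M ∩ dirE Ω).ncard := by
    have hsub : Set.range φ ⊆ dirBdry M ∩ dirE Ω := by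
      rintro q ⟨i, rfl⟩; exact hφmem i
    have h1 : (Set.range φ).ncard = k := by
      rw [← Set.image_univ, Set.ncard_image_of_injective _ hφinj, Set.ncard_univ,
        Nat.card_zmod]
    rw [← h1]
    exact Set.ncard_le_ncard hsub hLHSfin
  -- upper bound on the boundary of F
  have hRHScard : (dirBdry F ∩ dirE Ω).ncard ≤ k - 1 := by
    have hTfin : ((Set.univ : Set (ZMod k)) \ {j0}).Finite :=
      Set.Finite.diff Set.finite_univ
    have hTcard : ((Set.univ : Set (ZMod k)) \ {j0}).ncard = k - 1 := by
      rw [Set.ncard_diff_singleton_of_mem (Set.mem_univ j0),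
        Set.ncard_univ, Nat.card_zmod]
    rw [← hTcard]
    refine Set.ncard_le_ncard_of_injOn (fun p => Function.invFun x p.2) ?_ ?_ hTfin
    · intro p hp
      obtain ⟨_, _, j, hj, _, hjne⟩ := hstruct p hp
      refine ⟨Set.mem_univ _, ?_⟩
      simp only [Set.mem_singleton_iff]
      rw [hj, Function.leftInverse_invFun hinj j]
      exact hjne
    · intro p hp q hq hfpq
      obtain ⟨hpM, hpΩ, j, hj, hpadj, _⟩ := hstruct p hp
      obtain ⟨hqM, hqΩ, j', hj', hqadj, _⟩ := hstruct q hq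
      dsimp only at hfpq
      rw [hj, hj', Function.leftInverse_invFun hinj j,
        Function.leftInverse_invFun hinj j'] at hfpq
      subst hfpq
      have h2 : p.2 = q.2 := by rw [hj, hj']
      have h1 : p.1 = q.1 := huniq j p.1 q.1 hpM hpΩ hpadj hqM hqΩ hqadj
      exact Prod.ext_iff.2 ⟨h1, h2⟩
  omega

end Min

section Cross
variable {k : ℕ} [NeZero k] (x : ZMod k → Vtx 2)

/-- refined horizontal invariance. -/
lemma W1r' (a b : ℤ)
    (h1 : ∀ j, (x j 0 = a + 1 ∧ x j 1 = b) →
      ¬(x (j+1) 0 = x j 0 ∧ x (j+1) 1 = x j 1 + 1))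
    (h2 : offC x (a+1) (b+1)) :
    wind x (a+1) b = wind x a b := by
  have hsum := wind_sub_horiz x a b
  rw [Finset.sum_eq_zero (fun i _ => ?_)] at hsum
  · linarith
  · have hA : ¬(x i 0 = a + 1 ∧ x i 1 = b ∧ x (i+1) 0 = x i 0 ∧ x (i+1) 1 = x i 1 + 1) :=
      fun hc => h1 i ⟨hc.1, hc.2.1⟩ ⟨hc.2.2.1, hc.2.2.2⟩
    have hB : ¬(x i 0 = a + 1 ∧ x i 1 = b + 1 ∧ x (i+1) 0 = x i 0 ∧ x (i+1) 1 = x i 1 - 1) :=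
      fun hc => h2 i ⟨hc.1, hc.2.1⟩
    rw [if_neg hA, if_neg hB]
    ring

/-- crossing an up-step. -/
lemma up_cross (hk : 3 ≤ k) (hinj : Function.Injective x) (i : ZMod k)
    (hU : x (i+1) 0 = x i 0 ∧ x (i+1) 1 = x i 1 + 1) :
    wind x (x i 0 - 1) (x i 1) = wind x (x i 0) (x i 1) + 1 := by
  have hsum := wind_sub_horiz x (x i 0 - 1) (x i 1)
  rw [show x i 0 - 1 + 1 = x i 0 by ring] at hsum
  rw [Finset.sum_eq_single i (fun i' _ hne => ?_) (fun h => absurd (Finset.mem_univ i) h)]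
    at hsum
  · rw [if_pos ⟨rfl, rfl, hU.1, hU.2⟩, if_neg (by rintro ⟨-, h2, -⟩; omega)] at hsum
    linarith
  · have hA : ¬(x i' 0 = x i 0 ∧ x i' 1 = x i 1 ∧ x (i'+1) 0 = x i' 0 ∧
        x (i'+1) 1 = x i' 1 + 1) := by
      rintro ⟨ha, hb, -, -⟩
      exact hne (hinj (vext ha hb))
    have hB : ¬(x i' 0 = x i 0 ∧ x i' 1 = x i 1 + 1 ∧ x (i'+1) 0 = x i' 0 ∧
        x (i'+1) 1 = x i' 1 - 1) := by
      rintro ⟨ha, hb, hc, hd⟩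
      have hx : x i' = x (i+1) := vext (by omega) (by omega)
      have hii : i' = i + 1 := hinj hx
      subst hii
      have hx2 : x (i+1+1) = x i := vext (by omega) (by omega)
      have h2 : (2 : ZMod k) = 0 := by
        rw [show (2 : ZMod k) = (i+1+1) - i by ring, hinj hx2, sub_self]
      exact zmod_two_ne_zero hk h2
    rw [if_neg hA, if_neg hB]
    ring

/-- crossing a down-step. -/
lemma dn_cross (hk : 3 ≤ k) (hinj : Function.Injective x) (i : ZMod k)
    (hD : x (i+1) 0 = x i 0 ∧ x (i+1) 1 = x i 1 - 1) :
    wind x (x (i+1) 0 - 1) (x (i+1) 1) = wind x (x (i+1) 0) (x (i+1) 1) - 1 := by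
  have hsum := wind_sub_horiz x (x (i+1) 0 - 1) (x (i+1) 1)
  rw [show x (i+1) 0 - 1 + 1 = x (i+1) 0 by ring] at hsum
  rw [Finset.sum_eq_single i (fun i' _ hne => ?_) (fun h => absurd (Finset.mem_univ i) h)]
    at hsum
  · rw [if_neg (by rintro ⟨-, h2, -⟩; omega),
      if_pos ⟨hD.1.symm, by omega, by omega, by omega⟩] at hsum
    linarith
  · have hA : ¬(x i' 0 = x (i+1) 0 ∧ x i' 1 = x (i+1) 1 ∧ x (i'+1) 0 = x i' 0 ∧
        x (i'+1) 1 = x i' 1 + 1) := by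
      rintro ⟨ha, hb, hc, hd⟩
      have hx : x i' = x (i+1) := vext ha hb
      have hii : i' = i + 1 := hinj hx
      subst hii
      have hx2 : x (i+1+1) = x i := vext (by omega) (by omega)
      have h2 : (2 : ZMod k) = 0 := by
        rw [show (2 : ZMod k) = (i+1+1) - i by ring, hinj hx2, sub_self]
      exact zmod_two_ne_zero hk h2
    have hB : ¬(x i' 0 = x (i+1) 0 ∧ x i' 1 = x (i+1) 1 + 1 ∧ x (i'+1) 0 = x i' 0 ∧
        x (i'+1) 1 = x i' 1 - 1) := by
      rintro ⟨ha, hb, -, -⟩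
      have hx : x i' = x i := vext (by omega) (by omega)
      exact hne (hinj hx)
    rw [if_neg hA, if_neg hB]
    ring

/-- crossing a right-step. -/
lemma rt_cross (hk : 3 ≤ k) (hinj : Function.Injective x)
    (hadj : ∀ i, ZAdj (x i) (x (i+1))) (i : ZMod k)
    (hR : x (i+1) 0 = x i 0 + 1 ∧ x (i+1) 1 = x i 1) :
    wind x (x i 0) (x i 1 - 1) = wind x (x i 0) (x i 1) - 1 := by
  have hsum := wind_sub_vert x hadj (x i 0) (x i 1 - 1)
  rw [show x i 1 - 1 + 1 = x i 1 by ring] at hsum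
  rw [Finset.sum_eq_single i (fun i' _ hne => ?_) (fun h => absurd (Finset.mem_univ i) h)]
    at hsum
  · rw [if_neg (by rintro ⟨h1, -, -⟩; omega),
      if_pos ⟨rfl, rfl, hR.1, hR.2⟩] at hsum
    linarith
  · have hA : ¬(x i' 0 = x i 0 + 1 ∧ x i' 1 = x i 1 ∧ x (i'+1) 0 = x i' 0 - 1 ∧
        x (i'+1) 1 = x i' 1) := by
      rintro ⟨ha, hb, hc, hd⟩
      have hx : x i' = x (i+1) := vext (by omega) (by omega)
      have hii : i' = i + 1 := hinj hx
      subst hii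
      have hx2 : x (i+1+1) = x i := vext (by omega) (by omega)
      have h2 : (2 : ZMod k) = 0 := by
        rw [show (2 : ZMod k) = (i+1+1) - i by ring, hinj hx2, sub_self]
      exact zmod_two_ne_zero hk h2
    have hB : ¬(x i' 0 = x i 0 ∧ x i' 1 = x i 1 ∧ x (i'+1) 0 = x i' 0 + 1 ∧
        x (i'+1) 1 = x i' 1) := by
      rintro ⟨ha, hb, -, -⟩
      exact hne (hinj (vext ha hb))
    rw [if_neg hA, if_neg hB]
    ring

/-- crossing a left-step. -/
lemma lf_cross (hk : 3 ≤ k) (hinj : Function.Injective x)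
    (hadj : ∀ i, ZAdj (x i) (x (i+1))) (i : ZMod k)
    (hL : x (i+1) 0 = x i 0 - 1 ∧ x (i+1) 1 = x i 1) :
    wind x (x (i+1) 0) (x (i+1) 1 - 1) = wind x (x (i+1) 0) (x (i+1) 1) + 1 := by
  have hsum := wind_sub_vert x hadj (x (i+1) 0) (x (i+1) 1 - 1)
  rw [show x (i+1) 1 - 1 + 1 = x (i+1) 1 by ring] at hsum
  rw [Finset.sum_eq_single i (fun i' _ hne => ?_) (fun h => absurd (Finset.mem_univ i) h)]
    at hsum
  · rw [if_pos ⟨by omega, by omega, by omega, by omega⟩,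
      if_neg (by rintro ⟨h1, -, -⟩; omega)] at hsum
    linarith
  · have hA : ¬(x i' 0 = x (i+1) 0 + 1 ∧ x i' 1 = x (i+1) 1 ∧ x (i'+1) 0 = x i' 0 - 1 ∧
        x (i'+1) 1 = x i' 1) := by
      rintro ⟨ha, hb, -, -⟩
      have hx : x i' = x i := vext (by omega) (by omega)
      exact hne (hinj hx)
    have hB : ¬(x i' 0 = x (i+1) 0 ∧ x i' 1 = x (i+1) 1 ∧ x (i'+1) 0 = x i' 0 + 1 ∧
        x (i'+1) 1 = x i' 1) := by
      rintro ⟨ha, hb, hc, hd⟩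
      have hx : x i' = x (i+1) := vext ha hb
      have hii : i' = i + 1 := hinj hx
      subst hii
      have hx2 : x (i+1+1) = x i := vext (by omega) (by omega)
      have h2 : (2 : ZMod k) = 0 := by
        rw [show (2 : ZMod k) = (i+1+1) - i by ring, hinj hx2, sub_self]
      exact zmod_two_ne_zero hk h2
    rw [if_neg hA, if_neg hB]
    ring

/-- chordlessness gives off-loop vertices. -/
lemma chord_offC (hchord : ∀ i j, ZAdj (x i) (x j) → j = i + 1 ∨ j = i - 1)
    (i : ZMod k) (a b : ℤ)
    (hpat : (x i 0 = a ∧ (x i 1 = b + 1 ∨ x i 1 = b - 1)) ∨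
            (x i 1 = b ∧ (x i 0 = a + 1 ∨ x i 0 = a - 1)))
    (h1 : ¬(x (i+1) 0 = a ∧ x (i+1) 1 = b))
    (h2 : ¬(x (i-1) 0 = a ∧ x (i-1) 1 = b)) :
    offC x a b := by
  intro j hj
  obtain ⟨hj0, hj1⟩ := hj
  have hadjij : ZAdj (x i) (x j) := by
    rw [zadj_iff]; omega
  rcases hchord i j hadjij with rfl | rfl
  · exact h1 ⟨hj0, hj1⟩
  · exact h2 ⟨hj0, hj1⟩

end Cross

section Empty
variable {k : ℕ} [NeZero k] (x : ZMod k → Vtx 2) (M : Set (Vtx 2))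

theorem wind_zero (hM : IsMinimal M) (hk : 3 ≤ k) (hinj : Function.Injective x)
    (hadj : ∀ i, ZAdj (x i) (x (i+1))) (hbd : ∀ i, x i ∈ vB M) :
    ∀ a b : ℤ, offC x a b → wind x a b = 0 := by
  have hfree := no_free_int x M hM hk hinj hadj hbd
  have key : ∀ n : ℕ, ∀ v : Vtx 2, v ∈ IntS x → ((Rb x : ℤ) - v 0).toNat ≤ n → False := by
    intro n
    induction n with
    | zero =>
      intro v hv h0
      have hb := wind_ne_bounds x hadj (v 0) (v 1) hv.2
      omega
    | succ n ih =>
      intro v hv hn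
      have hb := wind_ne_bounds x hadj (v 0) (v 1) hv.2
      by_cases hoff : offC x (v 0 + 1) (v 1)
      · have hwind : wind x (v 0 + 1) (v 1) = wind x (v 0) (v 1) :=
          W1r x (v 0) (v 1) hoff
        set w : Vtx 2 := ![v 0 + 1, v 1] with hwdef
        have hw0 : w 0 = v 0 + 1 := rfl
        have hw1 : w 1 = v 1 := rfl
        have hwInt : w ∈ IntS x :=
          ⟨by rw [hw0, hw1]; exact hoff, by rw [hw0, hw1, hwind]; exact hv.2⟩
        exact ih w hwInt (by rw [hw0]; omega)
      · unfold offC at hoff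
        push_neg at hoff
        obtain ⟨j, hj0, hj1⟩ := hoff
        have hadjv : ZAdj v (x j) := by rw [zadj_iff]; omega
        exact hfree v j hadjv hv
  intro a b hoff
  by_contra hw
  have hv : (![a, b] : Vtx 2) ∈ IntS x := ⟨hoff, hw⟩
  exact key (((Rb x : ℤ) - a).toNat) ![a, b] hv le_rfl

end Empty

section Straight
variable {k : ℕ} [NeZero k] (x : ZMod k → Vtx 2)

lemma noUU (hk : 3 ≤ k) (hinj : Function.Injective x)
    (hchord : ∀ i j, ZAdj (x i) (x j) → j = i + 1 ∨ j = i - 1)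
    (h0 : ∀ a b : ℤ, offC x a b → wind x a b = 0) (i : ZMod k)
    (h1 : x (i+1) 0 = x i 0 ∧ x (i+1) 1 = x i 1 + 1)
    (h2 : x (i+1+1) 0 = x (i+1) 0 ∧ x (i+1+1) 1 = x (i+1) 1 + 1) : False := by
  have hcross := up_cross x hk hinj (i+1) h2
  have hoffL : offC x (x (i+1) 0 - 1) (x (i+1) 1) := by
    refine chord_offC x hchord (i+1) _ _ (Or.inr ⟨rfl, Or.inl (by ring)⟩) ?_ ?_
    · rintro ⟨ha, hb⟩; omega
    · rw [show i + 1 - 1 = i by ring]; rintro ⟨ha, hb⟩; omega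
  have hoffR : offC x (x (i+1) 0 + 1) (x (i+1) 1) := by
    refine chord_offC x hchord (i+1) _ _ (Or.inr ⟨rfl, Or.inr (by ring)⟩) ?_ ?_
    · rintro ⟨ha, hb⟩; omega
    · rw [show i + 1 - 1 = i by ring]; rintro ⟨ha, hb⟩; omega
  have hW := W1r x (x (i+1) 0) (x (i+1) 1) hoffR
  have z1 := h0 _ _ hoffL
  have z2 := h0 _ _ hoffR
  omega

lemma noDD (hk : 3 ≤ k) (hinj : Function.Injective x)
    (hchord : ∀ i j, ZAdj (x i) (x j) → j = i + 1 ∨ j = i - 1)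
    (h0 : ∀ a b : ℤ, offC x a b → wind x a b = 0) (i : ZMod k)
    (h1 : x (i+1) 0 = x i 0 ∧ x (i+1) 1 = x i 1 - 1)
    (h2 : x (i+1+1) 0 = x (i+1) 0 ∧ x (i+1+1) 1 = x (i+1) 1 - 1) : False := by
  have hcross := dn_cross x hk hinj i h1
  have hoffL : offC x (x (i+1) 0 - 1) (x (i+1) 1) := by
    refine chord_offC x hchord (i+1) _ _ (Or.inr ⟨rfl, Or.inl (by ring)⟩) ?_ ?_
    · rintro ⟨ha, hb⟩; omega
    · rw [show i + 1 - 1 = i by ring]; rintro ⟨ha, hb⟩; omega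
  have hoffR : offC x (x (i+1) 0 + 1) (x (i+1) 1) := by
    refine chord_offC x hchord (i+1) _ _ (Or.inr ⟨rfl, Or.inr (by ring)⟩) ?_ ?_
    · rintro ⟨ha, hb⟩; omega
    · rw [show i + 1 - 1 = i by ring]; rintro ⟨ha, hb⟩; omega
  have hW := W1r x (x (i+1) 0) (x (i+1) 1) hoffR
  have z1 := h0 _ _ hoffL
  have z2 := h0 _ _ hoffR
  omega

lemma noRR (hk : 3 ≤ k) (hinj : Function.Injective x)
    (hadj : ∀ i, ZAdj (x i) (x (i+1)))
    (hchord : ∀ i j, ZAdj (x i) (x j) → j = i + 1 ∨ j = i - 1)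
    (h0 : ∀ a b : ℤ, offC x a b → wind x a b = 0) (i : ZMod k)
    (h1 : x (i+1) 0 = x i 0 + 1 ∧ x (i+1) 1 = x i 1)
    (h2 : x (i+1+1) 0 = x (i+1) 0 + 1 ∧ x (i+1+1) 1 = x (i+1) 1) : False := by
  have hcross := rt_cross x hk hinj hadj (i+1) h2
  have hoffD : offC x (x (i+1) 0) (x (i+1) 1 - 1) := by
    refine chord_offC x hchord (i+1) _ _ (Or.inl ⟨rfl, Or.inl (by ring)⟩) ?_ ?_
    · rintro ⟨ha, hb⟩; omega
    · rw [show i + 1 - 1 = i by ring]; rintro ⟨ha, hb⟩; omega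
  have hoffU : offC x (x (i+1) 0) (x (i+1) 1 + 1) := by
    refine chord_offC x hchord (i+1) _ _ (Or.inl ⟨rfl, Or.inr (by ring)⟩) ?_ ?_
    · rintro ⟨ha, hb⟩; omega
    · rw [show i + 1 - 1 = i by ring]; rintro ⟨ha, hb⟩; omega
  have hW := W2u x hadj (x (i+1) 0) (x (i+1) 1) hoffU
  have z1 := h0 _ _ hoffD
  have z2 := h0 _ _ hoffU
  omega

lemma noLL (hk : 3 ≤ k) (hinj : Function.Injective x)
    (hadj : ∀ i, ZAdj (x i) (x (i+1)))
    (hchord : ∀ i j, ZAdj (x i) (x j) → j = i + 1 ∨ j = i - 1)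
    (h0 : ∀ a b : ℤ, offC x a b → wind x a b = 0) (i : ZMod k)
    (h1 : x (i+1) 0 = x i 0 - 1 ∧ x (i+1) 1 = x i 1)
    (h2 : x (i+1+1) 0 = x (i+1) 0 - 1 ∧ x (i+1+1) 1 = x (i+1) 1) : False := by
  have hcross := lf_cross x hk hinj hadj i h1
  have hoffD : offC x (x (i+1) 0) (x (i+1) 1 - 1) := by
    refine chord_offC x hchord (i+1) _ _ (Or.inl ⟨rfl, Or.inl (by ring)⟩) ?_ ?_
    · rintro ⟨ha, hb⟩; omega
    · rw [show i + 1 - 1 = i by ring]; rintro ⟨ha, hb⟩; omega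
  have hoffU : offC x (x (i+1) 0) (x (i+1) 1 + 1) := by
    refine chord_offC x hchord (i+1) _ _ (Or.inl ⟨rfl, Or.inr (by ring)⟩) ?_ ?_
    · rintro ⟨ha, hb⟩; omega
    · rw [show i + 1 - 1 = i by ring]; rintro ⟨ha, hb⟩; omega
  have hW := W2u x hadj (x (i+1) 0) (x (i+1) 1) hoffU
  have z1 := h0 _ _ hoffD
  have z2 := h0 _ _ hoffU
  omega

lemma lexmax_chain (hinj : Function.Injective x)
    (h0 : ∀ a b : ℤ, offC x a b → wind x a b = 0) (i0 : ZMod k)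
    (hmax0 : ∀ j, x j 0 ≤ x i0 0)
    (hmax1 : ∀ j, x j 0 = x i0 0 → x j 1 ≤ x i0 1)
    (hU0 : ¬(x (i0+1) 0 = x i0 0 ∧ x (i0+1) 1 = x i0 1 + 1)) :
    wind x (x i0 0 - 1) (x i0 1) = 0 := by
  have hoff_up : offC x (x i0 0) (x i0 1 + 1) := by
    intro j hj
    have := hmax1 j hj.1
    omega
  have hoff_r : offC x (x i0 0 + 1) (x i0 1) := by
    intro j hj
    have := hmax0 j
    omega
  have hW1 : wind x (x i0 0 - 1 + 1) (x i0 1) = wind x (x i0 0 - 1) (x i0 1) := by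
    refine W1r' x (x i0 0 - 1) (x i0 1) (fun j hj => ?_) ?_
    · have hxj : x j = x i0 := vext (by omega) (by omega)
      have : j = i0 := hinj hxj
      subst this
      intro hc
      exact hU0 ⟨by omega, by omega⟩
    · rw [show x i0 0 - 1 + 1 = x i0 0 by ring]
      exact hoff_up
  rw [show x i0 0 - 1 + 1 = x i0 0 by ring] at hW1
  have hW2 := W1r x (x i0 0) (x i0 1) hoff_r
  have z := h0 _ _ hoff_r
  omega

lemma zmod_four (hk : 3 ≤ k) (h : (4 : ZMod k) = 0) : k = 4 := by
  have h4 : ((4 : ℕ) : ZMod k) = 0 := by exact_mod_cast h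
  have hdvd := (ZMod.natCast_eq_zero_iff 4 k).1 h4
  have hle := Nat.le_of_dvd (by norm_num) hdvd
  interval_cases k
  · exact absurd hdvd (by norm_num)
  · rfl

end Straight

/-- a simple closed loop (a chordless cycle) contained in the vertex boundary
of a minimal subgraph of `ℤ²` must be a unit square, i.e. a 4-cycle. -/
theorem loop_is_unit_square {M : Set (Vtx 2)} (hM : IsMinimal M)
    (k : ℕ) (hk : 3 ≤ k) (x : ZMod k → Vtx 2) (hinj : Function.Injective x)
    (hadj : ∀ i, ZAdj (x i) (x (i + 1)))
    (hbd : ∀ i, x i ∈ vB M)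
    (hchord : ∀ i j, ZAdj (x i) (x j) → j = i + 1 ∨ j = i - 1) :
    k = 4 := by
  haveI : NeZero k := ⟨by omega⟩
  haveI : Nonempty (ZMod k) := ⟨0⟩
  have h0 := wind_zero x M hM hk hinj hadj hbd
  obtain ⟨i0, -, hmax⟩ := Finset.exists_max_image Finset.univ
    (fun j : ZMod k => toLex (x j 0, x j 1)) Finset.univ_nonempty
  have hmax' : ∀ j, x j 0 < x i0 0 ∨ (x j 0 = x i0 0 ∧ x j 1 ≤ x i0 1) := by
    intro j
    have h := hmax j (Finset.mem_univ j)
    rw [Prod.Lex.le_iff] at h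
    exact h
  have hmax0 : ∀ j, x j 0 ≤ x i0 0 := fun j => by rcases hmax' j with h | h <;> omega
  have hmax1 : ∀ j, x j 0 = x i0 0 → x j 1 ≤ x i0 1 := fun j hj => by
    rcases hmax' j with h | h <;> omega
  have hne2 : ∀ a : ZMod k, x (a+1+1) ≠ x a := by
    intro a h
    have h2 : (2 : ZMod k) = 0 := by
      rw [show (2 : ZMod k) = (a+1+1) - a by ring, hinj h, sub_self]
    exact zmod_two_ne_zero hk h2
  have hne2' : ∀ a : ZMod k, x (a-1-1) ≠ x a := by
    intro a h
    have h2 : (2 : ZMod k) = 0 := by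
      rw [show (2 : ZMod k) = a - (a-1-1) by ring, hinj h, sub_self]
    exact zmod_two_ne_zero hk h2
  have hnotU0 : ¬(x (i0+1) 0 = x i0 0 ∧ x (i0+1) 1 = x i0 1 + 1) := by
    rintro ⟨ha, hb⟩
    have := hmax1 (i0+1) ha
    omega
  have hs0 := step_cases x i0 (hadj i0)
  have hsm := step_cases x (i0-1) (hadj (i0-1))
  rw [show i0 - 1 + 1 = i0 by ring] at hsm
  rcases hs0 with hU0 | hD0 | hR0 | hL0
  · exact absurd hU0 hnotU0
  · -- step i0 goes down
    rcases hsm with hUm | hDm | hRm | hLm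
    · -- x (i0-1) = x (i0+1) : contradiction
      exfalso
      have hx : x (i0+1) = x (i0-1) := vext (by omega) (by omega)
      exact loopnbr_ne x hk hinj i0 hx
    · exfalso; have := hmax1 (i0-1) (by omega); omega
    · -- CASE A : enters from the west, leaves south
      have hs1 := step_cases x (i0+1) (hadj (i0+1))
      rcases hs1 with hA1 | hB1 | hC1 | hE1
      · exact absurd (vext (by omega) (by omega) : x (i0+1+1) = x i0) (hne2 i0)
      · exact (noDD x hk hinj hchord h0 i0 hD0 hB1).elim
      · exfalso; have := hmax0 (i0+1+1); omega
      · -- x (i0+2) = p - e1 - e2 ; now look at x (i0-2)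
        have hs2 := step_cases x (i0-1-1) (hadj (i0-1-1))
        rw [show i0 - 1 - 1 + 1 = i0 - 1 by ring] at hs2
        rcases hs2 with hA2 | hB2 | hC2 | hE2
        · -- x (i0-2) = p - e1 - e2 = x (i0+2) : the loop closes up, k ∣ 4
          have hx : x (i0+1+1) = x (i0-1-1) := vext (by omega) (by omega)
          have h4 : (4 : ZMod k) = 0 := by
            rw [show (4 : ZMod k) = (i0+1+1) - (i0-1-1) by ring, hinj hx, sub_self]
          exact zmod_four hk h4
        · -- bad branch : loop turns up at the west neighbour
          exfalso
          have hcross := rt_cross x hk hinj hadj (i0-1)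
            (⟨by rw [show i0-1+1 = i0 by ring]; omega,
              by rw [show i0-1+1 = i0 by ring]; omega⟩)
          have hoff_bl : offC x (x (i0-1) 0) (x (i0-1) 1 - 1) := by
            refine chord_offC x hchord (i0-1) _ _ (Or.inl ⟨rfl, Or.inl (by ring)⟩) ?_ ?_
            · rw [show i0-1+1 = i0 by ring]; rintro ⟨ha, hb⟩; omega
            · rintro ⟨ha, hb⟩; omega
          have z1 := h0 _ _ hoff_bl
          have hchain := lexmax_chain x hinj h0 i0 hmax0 hmax1 hnotU0
          rw [show x (i0-1) 0 = x i0 0 - 1 by omega,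
            show x (i0-1) 1 = x i0 1 by omega] at hcross z1
          omega
        · -- two right steps in a row
          exfalso
          refine noRR x hk hinj hadj hchord h0 (i0-1-1) ?_ ?_
          · constructor <;> rw [show i0-1-1+1 = i0-1 by ring] <;> omega
          · constructor <;>
              rw [show i0-1-1+1+1 = i0 by ring, show i0-1-1+1 = i0-1 by ring] <;> omega
        · exact absurd (vext (by omega) (by omega) : x (i0-1-1) = x i0) (hne2' i0)
    · exfalso; have := hmax0 (i0-1); omega
  · exfalso; have := hmax0 (i0+1); omega
  · -- step i0 goes left
    rcases hsm with hUm | hDm | hRm | hLm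
    · -- CASE B : enters from the south, leaves west
      have hs2 := step_cases x (i0-1-1) (hadj (i0-1-1))
      rw [show i0 - 1 - 1 + 1 = i0 - 1 by ring] at hs2
      rcases hs2 with hA2 | hB2 | hC2 | hE2
      · -- two up steps in a row
        exfalso
        refine noUU x hk hinj hchord h0 (i0-1-1) ?_ ?_
        · constructor <;> rw [show i0-1-1+1 = i0-1 by ring] <;> omega
        · constructor <;>
            rw [show i0-1-1+1+1 = i0 by ring, show i0-1-1+1 = i0-1 by ring] <;> omega
      · exact absurd (vext (by omega) (by omega) : x (i0-1-1) = x i0) (hne2' i0)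
      · -- x (i0-2) = p - e1 - e2 ; now look at x (i0+2)
        have hs1 := step_cases x (i0+1) (hadj (i0+1))
        rcases hs1 with hA1 | hB1 | hC1 | hE1
        · -- bad branch : loop turns up at the west neighbour
          exfalso
          have hcross := lf_cross x hk hinj hadj i0 hL0
          have hoff_bl : offC x (x (i0+1) 0) (x (i0+1) 1 - 1) := by
            refine chord_offC x hchord (i0+1) _ _ (Or.inl ⟨rfl, Or.inl (by ring)⟩) ?_ ?_
            · rintro ⟨ha, hb⟩; omega
            · rw [show i0+1-1 = i0 by ring]; rintro ⟨ha, hb⟩; omega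
          have z1 := h0 _ _ hoff_bl
          have hchain := lexmax_chain x hinj h0 i0 hmax0 hmax1 hnotU0
          rw [show x (i0+1) 0 = x i0 0 - 1 by omega,
            show x (i0+1) 1 = x i0 1 by omega] at hcross z1
          omega
        · -- loop closes up, k ∣ 4
          have hx : x (i0+1+1) = x (i0-1-1) := vext (by omega) (by omega)
          have h4 : (4 : ZMod k) = 0 := by
            rw [show (4 : ZMod k) = (i0+1+1) - (i0-1-1) by ring, hinj hx, sub_self]
          exact zmod_four hk h4
        · exact absurd (vext (by omega) (by omega) : x (i0+1+1) = x i0) (hne2 i0)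
        · exact (noLL x hk hinj hadj hchord h0 i0 hL0 hE1).elim
      · exfalso; have := hmax0 (i0-1-1); omega
    · exfalso; have := hmax1 (i0-1) (by omega); omega
    · -- x (i0-1) = x (i0+1) : contradiction
      exfalso
      have hx : x (i0+1) = x (i0-1) := vext (by omega) (by omega)
      exact loopnbr_ne x hk hinj i0 hx
    · exfalso; have := hmax0 (i0-1); omega
end

section
/- If M⊂ℤⁿ is a minimal subgraph, then M cannot lie between two parallel coordinate hyperplanes: there is no index i and integers a<b such that a ≤ x_i ≤ b for all x∈M. -/
open Set

namespace NBH
variable {n : ℕ}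

def uv (i : Fin n) : Vtx n := fun j => if j = i then 1 else 0

lemma zadj_term_le {x y : Vtx n} (h : ZAdj x y) (j : Fin n) : (x j - y j).natAbs ≤ 1 := by
  rw [ZAdj] at h
  calc (x j - y j).natAbs
      ≤ ∑ k, (x k - y k).natAbs :=
        Finset.single_le_sum (f := fun k => (x k - y k).natAbs)
          (fun _ _ => Nat.zero_le _) (Finset.mem_univ j)
    _ = 1 := h

lemma zadj_spec {x y : Vtx n} (h : ZAdj x y) :
    ∃ j, (x j - y j).natAbs = 1 ∧ ∀ k, k ≠ j → x k = y k := by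
  rw [ZAdj] at h
  have hex : ∃ j, (x j - y j).natAbs ≠ 0 := by
    by_contra hc
    push_neg at hc
    rw [Finset.sum_eq_zero (fun k _ => hc k)] at h
    exact absurd h (by omega)
  obtain ⟨j, hj⟩ := hex
  have hsplit : (∑ k ∈ Finset.univ.erase j, (x k - y k).natAbs) + (x j - y j).natAbs = 1 := by
    rw [Finset.sum_erase_add _ _ (Finset.mem_univ j)]; exact h
  have h0 : ∑ k ∈ Finset.univ.erase j, (x k - y k).natAbs = 0 := by omega
  refine ⟨j, by omega, fun k hk => ?_⟩
  have := Finset.sum_eq_zero_iff.mp h0 k (Finset.mem_erase.mpr ⟨hk, Finset.mem_univ k⟩)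
  omega

lemma zadj_of {x y : Vtx n} (j : Fin n) (h1 : (x j - y j).natAbs = 1)
    (h2 : ∀ k, k ≠ j → x k = y k) : ZAdj x y := by
  rw [ZAdj, Finset.sum_eq_single j]
  · exact h1
  · intro k _ hk; rw [h2 k hk]; simp
  · intro hj; exact absurd (Finset.mem_univ j) hj

lemma zadj_symm {x y : Vtx n} (h : ZAdj x y) : ZAdj y x := by
  rw [ZAdj] at h ⊢
  calc (∑ i, (y i - x i).natAbs) = ∑ i, (x i - y i).natAbs := by
        refine Finset.sum_congr rfl fun k _ => ?_; omega
    _ = 1 := h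

lemma zadj_add_uv (x : Vtx n) (i : Fin n) : ZAdj (x + uv i) x := by
  refine zadj_of i ?_ fun k hk => ?_
  · simp [uv]
  · simp [uv, hk]

lemma zadj_sub_uv (x : Vtx n) (i : Fin n) : ZAdj (x - uv i) x := by
  refine zadj_of i ?_ fun k hk => ?_
  · simp [uv]
  · simp [uv, hk]

def box (i : Fin n) (a b : ℤ) (x0 : Vtx n) (R : ℕ) : Set (Vtx n) :=
  {x | (a ≤ x i ∧ x i ≤ b) ∧ ∀ j, j ≠ i → (x j - x0 j).natAbs ≤ R}

def pr (i : Fin n) (x : Vtx n) : Vtx n := Function.update x i 0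

lemma pr_apply_ne (i : Fin n) {j : Fin n} (hj : j ≠ i) (x : Vtx n) : pr i x j = x j :=
  Function.update_of_ne hj _ _

lemma pr_apply_self (i : Fin n) (x : Vtx n) : pr i x i = 0 :=
  Function.update_self _ _ _

lemma pr_eq_iff {i : Fin n} {x y : Vtx n} : pr i x = pr i y ↔ ∀ j, j ≠ i → x j = y j := by
  constructor
  · intro h j hj
    have := congrFun h j
    rwa [pr_apply_ne i hj, pr_apply_ne i hj] at this
  · intro h
    funext j
    by_cases hj : j = i
    · subst hj; rw [pr_apply_self, pr_apply_self]
    · rw [pr_apply_ne i hj, pr_apply_ne i hj]; exact h j hj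

lemma box_mono (i : Fin n) (a b : ℤ) (x0 : Vtx n) {R S : ℕ} (h : R ≤ S) :
    box i a b x0 R ⊆ box i a b x0 S := by
  intro x ⟨h1, h2⟩
  exact ⟨h1, fun j hj => le_trans (h2 j hj) h⟩

lemma box_finite (i : Fin n) (a b : ℤ) (x0 : Vtx n) (R : ℕ) : (box i a b x0 R).Finite := by
  refine Set.Finite.subset (Set.Finite.pi (t := fun j : Fin n =>
    Set.Icc (min a (x0 j - R)) (max b (x0 j + R))) (fun j => Set.finite_Icc _ _)) ?_
  intro x ⟨h1, h2⟩
  intro j _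
  simp only [Set.mem_Icc]
  by_cases hj : j = i
  · subst hj
    exact ⟨le_trans (min_le_left _ _) h1.1, le_trans h1.2 (le_max_left _ _)⟩
  · have := h2 j hj
    constructor
    · refine le_trans (min_le_right _ _) ?_; omega
    · refine le_trans ?_ (le_max_right _ _); omega

lemma nbrs_finite (w : Vtx n) : {z : Vtx n | ZAdj z w}.Finite := by
  refine Set.Finite.subset (Set.Finite.pi (t := fun j : Fin n =>
    Set.Icc (w j - 1) (w j + 1)) (fun j => Set.finite_Icc _ _)) ?_
  intro z hz j _
  have := zadj_term_le hz j
  simp only [Set.mem_Icc]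
  omega

lemma extB_finite {Ω : Set (Vtx n)} (hΩ : Ω.Finite) : (extB Ω).Finite := by
  refine Set.Finite.subset (Set.Finite.biUnion hΩ (fun w _ => nbrs_finite w)) ?_
  rintro z ⟨_, w, hw, hzw⟩
  exact Set.mem_biUnion hw hzw

lemma clos_finite {Ω : Set (Vtx n)} (hΩ : Ω.Finite) : (clos Ω).Finite :=
  Set.Finite.union hΩ (extB_finite hΩ)

lemma dirE_finite {Ω : Set (Vtx n)} (hΩ : Ω.Finite) : (dirE Ω).Finite := by
  refine Set.Finite.subset (Set.Finite.prod (clos_finite hΩ) (clos_finite hΩ)) ?_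
  rintro ⟨u, v⟩ ⟨_, h1, h2, _⟩
  exact Set.mem_prod.mpr ⟨h1, h2⟩

lemma lower {M : Set (Vtx n)} {i : Fin n} {a b : ℤ} (x0 : Vtx n)
    (hMs : ∀ x ∈ M, a ≤ x i ∧ x i ≤ b) (R : ℕ) :
    2 * (pr i '' (M ∩ box i a b x0 R)).ncard ≤ (dirBdry M ∩ dirE (box i a b x0 R)).ncard := by
  set Ω := box i a b x0 R with hΩdef
  have hΩfin : Ω.Finite := box_finite i a b x0 R
  have hEfin : (dirBdry M ∩ dirE Ω).Finite :=
    (dirE_finite hΩfin).subset Set.inter_subset_right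
  set T : Set (Vtx n × Vtx n) := {q | q.1 ∈ M ∩ Ω ∧ q.2 = q.1 + uv i ∧ q.2 ∉ M} with hT
  set B : Set (Vtx n × Vtx n) := {q | q.1 ∈ M ∩ Ω ∧ q.2 = q.1 - uv i ∧ q.2 ∉ M} with hB
  have hTsub : T ⊆ dirBdry M ∩ dirE Ω := by
    rintro ⟨u, v⟩ ⟨⟨huM, huΩ⟩, hv, hvM⟩
    simp only at hv
    subst hv
    have hadj : ZAdj u (u + uv i) := zadj_symm (zadj_add_uv u i)
    refine ⟨⟨hadj, huM, hvM⟩, hadj, Or.inl huΩ, ?_, Or.inl huΩ⟩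
    by_cases hvΩ : u + uv i ∈ Ω
    · exact Or.inl hvΩ
    · exact Or.inr ⟨hvΩ, u, huΩ, zadj_add_uv u i⟩
  have hBsub : B ⊆ dirBdry M ∩ dirE Ω := by
    rintro ⟨u, v⟩ ⟨⟨huM, huΩ⟩, hv, hvM⟩
    simp only at hv
    subst hv
    have hadj : ZAdj u (u - uv i) := zadj_symm (zadj_sub_uv u i)
    refine ⟨⟨hadj, huM, hvM⟩, hadj, Or.inl huΩ, ?_, Or.inl huΩ⟩
    by_cases hvΩ : u - uv i ∈ Ω
    · exact Or.inl hvΩ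
    · exact Or.inr ⟨hvΩ, u, huΩ, zadj_sub_uv u i⟩
  have hdisj : Disjoint T B := by
    rw [Set.disjoint_left]
    rintro ⟨u, v⟩ ⟨_, hv, _⟩ ⟨_, hv', _⟩
    simp only at hv hv'
    have h1 : v i = u i + 1 := by rw [hv]; simp [uv]
    have h2 : v i = u i - 1 := by rw [hv']; simp [uv]
    omega
  have hTfin : T.Finite := hEfin.subset hTsub
  have hBfin : B.Finite := hEfin.subset hBsub
  have hPT : (pr i '' (M ∩ Ω)).ncard ≤ T.ncard := by
    have hsub : pr i '' (M ∩ Ω) ⊆ (fun q : Vtx n × Vtx n => pr i q.1) '' T := by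
      rintro p ⟨x, hx, rfl⟩
      set K := {y | y ∈ M ∩ Ω ∧ pr i y = pr i x} with hK
      have hKfin : K.Finite := hΩfin.subset (fun y hy => hy.1.2)
      have hKne : K.Nonempty := ⟨x, hx, rfl⟩
      obtain ⟨z, hzK, hzmax⟩ := Set.Finite.exists_maximalFor (fun y => y i) K hKfin hKne
      have hznM : z + uv i ∉ M := by
        intro hmem
        have hlat : ∀ j, j ≠ i → (z + uv i) j = z j := by
          intro j hj; simp [uv, hj]
        have hz1 : z + uv i ∈ Ω := by
          refine ⟨hMs _ hmem, fun j hj => ?_⟩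
          rw [hlat j hj]
          exact hzK.1.2.2 j hj
        have hzK' : z + uv i ∈ K := by
          refine ⟨⟨hmem, hz1⟩, ?_⟩
          rw [pr_eq_iff]
          intro j hj
          rw [hlat j hj]
          exact pr_eq_iff.mp hzK.2 j hj
        have hle : z i ≤ (z + uv i) i := by simp [uv]
        have := hzmax hzK' hle
        simp [uv] at this
      refine ⟨(z, z + uv i), ⟨hzK.1, rfl, hznM⟩, hzK.2⟩
    calc (pr i '' (M ∩ Ω)).ncard
        ≤ ((fun q : Vtx n × Vtx n => pr i q.1) '' T).ncard :=
          Set.ncard_le_ncard hsub (hTfin.image _)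
      _ ≤ T.ncard := Set.ncard_image_le hTfin
  have hPB : (pr i '' (M ∩ Ω)).ncard ≤ B.ncard := by
    have hsub : pr i '' (M ∩ Ω) ⊆ (fun q : Vtx n × Vtx n => pr i q.1) '' B := by
      rintro p ⟨x, hx, rfl⟩
      set K := {y | y ∈ M ∩ Ω ∧ pr i y = pr i x} with hK
      have hKfin : K.Finite := hΩfin.subset (fun y hy => hy.1.2)
      have hKne : K.Nonempty := ⟨x, hx, rfl⟩
      obtain ⟨z, hzK, hzmax⟩ := Set.Finite.exists_maximalFor (fun y => -(y i)) K hKfin hKne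
      have hznM : z - uv i ∉ M := by
        intro hmem
        have hlat : ∀ j, j ≠ i → (z - uv i) j = z j := by
          intro j hj; simp [uv, hj]
        have hz1 : z - uv i ∈ Ω := by
          refine ⟨hMs _ hmem, fun j hj => ?_⟩
          rw [hlat j hj]
          exact hzK.1.2.2 j hj
        have hzK' : z - uv i ∈ K := by
          refine ⟨⟨hmem, hz1⟩, ?_⟩
          rw [pr_eq_iff]
          intro j hj
          rw [hlat j hj]
          exact pr_eq_iff.mp hzK.2 j hj
        have hle : -(z i) ≤ -((z - uv i) i) := by simp [uv]
        have := hzmax hzK' hle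
        simp [uv] at this
      refine ⟨(z, z - uv i), ⟨hzK.1, rfl, hznM⟩, hzK.2⟩
    calc (pr i '' (M ∩ Ω)).ncard
        ≤ ((fun q : Vtx n × Vtx n => pr i q.1) '' B).ncard :=
          Set.ncard_le_ncard hsub (hBfin.image _)
      _ ≤ B.ncard := Set.ncard_image_le hBfin
  calc 2 * (pr i '' (M ∩ Ω)).ncard
      = (pr i '' (M ∩ Ω)).ncard + (pr i '' (M ∩ Ω)).ncard := by ring
    _ ≤ T.ncard + B.ncard := add_le_add hPT hPB
    _ = (T ∪ B).ncard := (Set.ncard_union_eq hdisj hTfin hBfin).symm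
    _ ≤ (dirBdry M ∩ dirE Ω).ncard :=
        Set.ncard_le_ncard (Set.union_subset hTsub hBsub) hEfin

lemma upper {M : Set (Vtx n)} {i : Fin n} {a b : ℤ} (x0 : Vtx n) (hab : a ≤ b)
    (hMs : ∀ x ∈ M, a ≤ x i ∧ x i ≤ b) (R : ℕ) :
    (dirBdry (M \ box i a b x0 R) ∩ dirE (box i a b x0 R)).ncard ≤
      ((b - a).toNat + 1) *
        ((pr i '' (M ∩ box i a b x0 (R+1))).ncard - (pr i '' (M ∩ box i a b x0 R)).ncard) := by
  classical
  set Ω := box i a b x0 R with hΩdef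
  have hΩfin : Ω.Finite := box_finite i a b x0 R
  set S := dirBdry (M \ Ω) ∩ dirE Ω with hSdef
  have hSfin : S.Finite := (dirE_finite hΩfin).subset Set.inter_subset_right
  have hstruct : ∀ q ∈ S, q.1 ∈ M ∧ q.1 ∉ Ω ∧ q.2 ∈ Ω ∧ ZAdj q.1 q.2 := by
    rintro ⟨u, v⟩ ⟨⟨hadj, hu, _⟩, _, _, _, hor⟩
    have hvΩ : v ∈ Ω := by
      rcases hor with h | h
      · exact absurd h hu.2
      · exact h
    exact ⟨hu.1, hu.2, hvΩ, hadj⟩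
  have hout : ∀ u : Vtx n, u ∈ M → u ∉ Ω → ∃ k, k ≠ i ∧ R < (u k - x0 k).natAbs := by
    intro u huM huΩ
    by_contra hc
    push_neg at hc
    exact huΩ ⟨hMs u huM, fun j hj => hc j hj⟩
  have hkey : ∀ u v v' : Vtx n, u ∈ M → u ∉ Ω → v ∈ Ω → ZAdj u v →
      v' ∈ Ω → ZAdj u v' → v = v' := by
    intro u v v' huM huΩ hvΩ hadj hv'Ω hadj'
    obtain ⟨j, hj1, hj2⟩ := zadj_spec hadj
    obtain ⟨j', hj1', hj2'⟩ := zadj_spec hadj'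
    obtain ⟨k, hki, hk⟩ := hout u huM huΩ
    have hkj : k = j := by
      by_contra hkj
      have h1 := hj2 k hkj
      have h2 := hvΩ.2 k hki
      omega
    have hkj' : k = j' := by
      by_contra hkj'
      have h1 := hj2' k hkj'
      have h2 := hv'Ω.2 k hki
      omega
    rw [← hkj] at hj1 hj2
    rw [← hkj'] at hj1' hj2'
    funext m
    by_cases hm : m = k
    · subst hm
      have h1 := hvΩ.2 m hki
      have h2 := hv'Ω.2 m hki
      omega
    · rw [← hj2 m hm, ← hj2' m hm]
  have hinj : Set.InjOn Prod.fst S := by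
    rintro ⟨u, v⟩ hq ⟨u', v'⟩ hq' he
    simp only at he
    subst he
    obtain ⟨h1, h2, h3, h4⟩ := hstruct _ hq
    obtain ⟨h1', h2', h3', h4'⟩ := hstruct _ hq'
    have := hkey u v v' h1 h2 h3 h4 h3' h4'
    rw [this]
  have hU : S.ncard = (Prod.fst '' S).ncard := (Set.ncard_image_of_injOn hinj).symm
  set U := Prod.fst '' S with hUdef
  have hUfin : U.Finite := hSfin.image _
  have hUsub : U ⊆ M ∩ (box i a b x0 (R+1) \ Ω) := by
    rintro u ⟨⟨u', v⟩, hq, rfl⟩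
    obtain ⟨h1, h2, h3, h4⟩ := hstruct _ hq
    refine ⟨h1, ⟨⟨hMs _ h1, ?_⟩, h2⟩⟩
    intro k hki
    obtain ⟨j, hj1, hj2⟩ := zadj_spec h4
    have hb := h3.2 k hki
    by_cases hkj : k = j
    · subst hkj; omega
    · have := hj2 k hkj; omega
  have hIcc : (Set.Icc a b).ncard = (b - a).toNat + 1 := by
    rw [← Finset.coe_Icc, Set.ncard_coe_finset, Int.card_Icc]
    omega
  have hfiber : ∀ p : Vtx n, {u ∈ U | pr i u = p}.ncard ≤ (b - a).toNat + 1 := by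
    intro p
    have hle : {u ∈ U | pr i u = p}.ncard ≤ (Set.Icc a b).ncard := by
      refine Set.ncard_le_ncard_of_injOn (fun u => u i) ?_ ?_ (Set.finite_Icc a b)
      · rintro u ⟨hu, _⟩
        obtain ⟨h1, -⟩ := hUsub hu
        exact Set.mem_Icc.mpr (hMs u h1)
      · rintro u ⟨_, hup⟩ u' ⟨_, hup'⟩ he
        funext m
        by_cases hm : m = i
        · subst hm; exact he
        · exact pr_eq_iff.mp (hup.trans hup'.symm) m hm
    rwa [hIcc] at hle
  have hcard : U.ncard ≤ ((b - a).toNat + 1) * (pr i '' U).ncard := by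
    have hcoeim : ((hUfin.toFinset.image (pr i) : Finset (Vtx n)) : Set (Vtx n))
        = pr i '' U := by
      rw [Finset.coe_image, Set.Finite.coe_toFinset]
    have key := Finset.card_le_mul_card_image (f := pr i) hUfin.toFinset
      ((b - a).toNat + 1) (fun p _ => by
        have hco : ((hUfin.toFinset.filter (fun u => pr i u = p) : Finset (Vtx n)) : Set (Vtx n))
            = {u ∈ U | pr i u = p} := by
          ext u
          simp [Set.Finite.mem_toFinset]
        calc (hUfin.toFinset.filter (fun u => pr i u = p)).card
            = ({u ∈ U | pr i u = p} : Set (Vtx n)).ncard := by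
              rw [← hco, Set.ncard_coe_finset]
          _ ≤ (b - a).toNat + 1 := hfiber p)
    calc U.ncard = hUfin.toFinset.card := Set.ncard_eq_toFinset_card U hUfin
      _ ≤ ((b - a).toNat + 1) * (hUfin.toFinset.image (pr i)).card := key
      _ = ((b - a).toNat + 1) * (pr i '' U).ncard := by
          rw [← hcoeim, Set.ncard_coe_finset]
  have hbigfin : (pr i '' (M ∩ box i a b x0 (R+1))).Finite :=
    (((box_finite i a b x0 (R+1)).subset Set.inter_subset_right).image _)
  have himg : pr i '' U ⊆ (pr i '' (M ∩ box i a b x0 (R+1))) \ (pr i '' (M ∩ Ω)) := by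
    rintro p ⟨u, hu, rfl⟩
    obtain ⟨h1, hbox, hnot⟩ := hUsub hu
    refine ⟨⟨u, ⟨h1, hbox⟩, rfl⟩, ?_⟩
    rintro ⟨y, hy, hpy⟩
    apply hnot
    refine ⟨hMs u h1, fun j hj => ?_⟩
    rw [← pr_eq_iff.mp hpy j hj]
    exact hy.2.2 j hj
  have hsubP : pr i '' (M ∩ Ω) ⊆ pr i '' (M ∩ box i a b x0 (R+1)) :=
    Set.image_mono (Set.inter_subset_inter_right M (box_mono i a b x0 (Nat.le_succ R)))
  have hdiff : ((pr i '' (M ∩ box i a b x0 (R+1))) \ (pr i '' (M ∩ Ω))).ncard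
      = (pr i '' (M ∩ box i a b x0 (R+1))).ncard - (pr i '' (M ∩ Ω)).ncard :=
    Set.ncard_diff hsubP (hbigfin.subset hsubP)
  calc S.ncard = U.ncard := hU
    _ ≤ ((b - a).toNat + 1) * (pr i '' U).ncard := hcard
    _ ≤ ((b - a).toNat + 1) *
        ((pr i '' (M ∩ box i a b x0 (R+1))) \ (pr i '' (M ∩ Ω))).ncard :=
        Nat.mul_le_mul_left _ (Set.ncard_le_ncard himg hbigfin.diff)
    _ = ((b - a).toNat + 1) *
        ((pr i '' (M ∩ box i a b x0 (R+1))).ncard - (pr i '' (M ∩ Ω)).ncard) := by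
        rw [hdiff]

lemma P_le {M : Set (Vtx n)} (i : Fin n) (a b : ℤ) (x0 : Vtx n) (R : ℕ) :
    (pr i '' (M ∩ box i a b x0 R)).ncard ≤ (2*R+1)^(n-1) := by
  classical
  set D : Finset (Vtx n) := Fintype.piFinset (fun j : Fin n =>
    if j = i then Finset.Icc (0:ℤ) 0 else Finset.Icc (x0 j - R) (x0 j + R)) with hD
  have hsub : pr i '' (M ∩ box i a b x0 R) ⊆ ↑D := by
    rintro p ⟨x, hx, rfl⟩
    simp only [Finset.mem_coe, hD, Fintype.mem_piFinset]
    intro j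
    by_cases hj : j = i
    · subst hj
      simp [pr_apply_self]
    · rw [if_neg hj, pr_apply_ne i hj]
      have := hx.2.2 j hj
      simp only [Finset.mem_Icc]
      omega
  have hcard : D.card = (2*R+1)^(n-1) := by
    rw [hD, Fintype.card_piFinset]
    have hc : ∀ j : Fin n,
        (if j = i then Finset.Icc (0:ℤ) 0 else Finset.Icc (x0 j - R) (x0 j + R)).card
        = if j = i then 1 else 2*R+1 := by
      intro j
      by_cases hj : j = i
      · rw [if_pos hj, if_pos hj, Int.card_Icc]
        decide
      · rw [if_neg hj, if_neg hj, Int.card_Icc]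
        omega
    rw [Finset.prod_congr rfl (fun j _ => hc j)]
    rw [← Finset.mul_prod_erase Finset.univ _ (Finset.mem_univ i), if_pos rfl, one_mul]
    rw [Finset.prod_congr rfl (fun j hj => if_neg (Finset.ne_of_mem_erase hj))]
    rw [Finset.prod_const, Finset.card_erase_of_mem (Finset.mem_univ i), Finset.card_univ,
      Fintype.card_fin]
  calc (pr i '' (M ∩ box i a b x0 R)).ncard ≤ (↑D : Set (Vtx n)).ncard :=
        Set.ncard_le_ncard hsub D.finite_toSet
    _ = (2*R+1)^(n-1) := by rw [Set.ncard_coe_finset, hcard]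

lemma sq_le_two_pow (t : ℕ) : (t+4)^2 ≤ 2^(t+4) := by
  induction t with
  | zero => norm_num
  | succ t ih =>
    have h2 : 2*(t+4)+1 ≤ (t+4)^2 := by nlinarith
    calc (t+1+4)^2 = (t+4)^2 + (2*(t+4)+1) := by ring
      _ ≤ 2^(t+4) + 2^(t+4) := add_le_add ih (le_trans h2 ih)
      _ = 2^(t+1+4) := by ring

lemma lin_lt_two_pow (a : ℕ) : ∃ s, 1 ≤ s ∧ a * s + 1 < 2 ^ s := by
  refine ⟨a + 4, by omega, ?_⟩
  have h1 : a*(a+4) + 1 < (a+4)^2 := by nlinarith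
  exact lt_of_lt_of_le h1 (sq_le_two_pow a)

lemma poly_lt_three_pow (c k : ℕ) : ∃ m, 1 ≤ m ∧ (c * m + 1)^k < 3^m := by
  rcases Nat.eq_zero_or_pos k with hk | hk
  · subst hk
    exact ⟨1, le_refl 1, by norm_num⟩
  · obtain ⟨s, hs1, hs⟩ := lin_lt_two_pow (c * k)
    refine ⟨k * s, Nat.one_le_iff_ne_zero.mpr (Nat.mul_ne_zero (by omega) (by omega)), ?_⟩
    have h1 : c * (k * s) + 1 < 2 ^ s := by
      rw [← mul_assoc]; exact hs
    calc (c * (k*s) + 1)^k < (2^s)^k := Nat.pow_lt_pow_left h1 (by omega)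
      _ = 2^(s*k) := by rw [← pow_mul]
      _ ≤ 3^(s*k) := Nat.pow_le_pow_left (by norm_num) _
      _ = 3^(k*s) := by rw [mul_comm]

lemma key_pow (h : ℕ) : ∀ t : ℕ, h * h^t + 2*t*h^t ≤ h * (h+2)^t := by
  intro t
  induction t with
  | zero => simp
  | succ t ih =>
    have expand : h * h^(t+1) + 2*(t+1)*h^(t+1) ≤ (h * h^t + 2*t*h^t) * (h+2) := by
      have e : (h * h^t + 2*t*h^t) * (h+2)
          = (h * (h^t*h) + 2*(t+1)*(h^t*h)) + 4*t*h^t := by ring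
      rw [pow_succ, e]
      exact Nat.le_add_right _ _
    calc h * h^(t+1) + 2*(t+1)*h^(t+1) ≤ (h * h^t + 2*t*h^t) * (h+2) := expand
      _ ≤ (h * (h+2)^t) * (h+2) := Nat.mul_le_mul_right _ ih
      _ = h * (h+2)^(t+1) := by ring

lemma three_le (h : ℕ) (hh : 1 ≤ h) : 3 * h^h ≤ (h+2)^h := by
  have hk := key_pow h h
  have e : h * h^h + 2*h*h^h = h * (3 * h^h) := by ring
  rw [e] at hk
  exact Nat.le_of_mul_le_mul_left hk (by omega)

lemma iterate3 (h : ℕ) (hh : 1 ≤ h) : ∀ m : ℕ, 3^m * h^(h*m) ≤ (h+2)^(h*m) := by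
  intro m
  induction m with
  | zero => simp
  | succ m ih =>
    have e1 : h*(m+1) = h*m + h := by ring
    rw [e1, pow_add, pow_add, pow_succ]
    calc 3^m * 3 * (h^(h*m) * h^h) = (3^m * h^(h*m)) * (3 * h^h) := by ring
      _ ≤ (h+2)^(h*m) * (h+2)^h := Nat.mul_le_mul ih (three_le h hh)
      _ = (h+2)^(h*m + h) := (pow_add _ _ _).symm

end NBH

/-- a minimal subgraph of `ℤⁿ` cannot lie between two parallel coordinate
hyperplanes. -/
theorem not_between_hyperplanes {n : ℕ} {M : Set (Vtx n)} (hM : IsMinimal M)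
    (hne : M.Nonempty) (hpr : M ≠ Set.univ) :
    ¬ ∃ (i : Fin n) (a b : ℤ), a < b ∧ ∀ x ∈ M, a ≤ x i ∧ x i ≤ b := by
  rintro ⟨i, a, b, hab, hslab⟩
  obtain ⟨x0, hx0⟩ := hne
  classical
  set h := (b - a).toNat + 1 with hhdef
  have hh1 : 1 ≤ h := by omega
  set P : ℕ → ℕ := fun R => (NBH.pr i '' (M ∩ NBH.box i a b x0 R)).ncard with hPdef
  have hPfin : ∀ R, (NBH.pr i '' (M ∩ NBH.box i a b x0 R)).Finite :=
    fun R => ((NBH.box_finite i a b x0 R).subset Set.inter_subset_right).image _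
  have hmono : ∀ R, P R ≤ P (R+1) := fun R =>
    Set.ncard_le_ncard (Set.image_mono (Set.inter_subset_inter_right M
      (NBH.box_mono i a b x0 (Nat.le_succ R)))) (hPfin (R+1))
  have hsymm : ∀ R : ℕ, symmDiff (M \ NBH.box i a b x0 R) M ⊆ NBH.box i a b x0 R := by
    intro R x hx
    rw [Set.mem_symmDiff] at hx
    rcases hx with ⟨⟨h1, _⟩, h2⟩ | ⟨h1, h2⟩
    · exact absurd h1 h2
    · by_contra hbox
      exact h2 ⟨h1, hbox⟩
  have hrec : ∀ R, (h+2) * P R ≤ h * P (R+1) := by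
    intro R
    have hmin := hM (NBH.box i a b x0 R) (NBH.box_finite i a b x0 R)
      (M \ NBH.box i a b x0 R) (hsymm R)
    have hlow := NBH.lower x0 hslab R
    have hup := NBH.upper x0 (le_of_lt hab) hslab R
    have h2le : 2 * P R ≤ h * (P (R+1) - P R) := le_trans hlow (le_trans hmin hup)
    have e : h * (P (R+1) - P R) + h * P R = h * P (R+1) := by
      rw [← Nat.mul_add, Nat.sub_add_cancel (hmono R)]
    calc (h+2) * P R = 2 * P R + h * P R := by ring
      _ ≤ h * (P (R+1) - P R) + h * P R := Nat.add_le_add_right h2le _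
      _ = h * P (R+1) := e
  have hgrow : ∀ R, (h+2)^R * P 0 ≤ h^R * P R := by
    intro R
    induction R with
    | zero => simp
    | succ R ih =>
      calc (h+2)^(R+1) * P 0 = (h+2) * ((h+2)^R * P 0) := by ring
        _ ≤ (h+2) * (h^R * P R) := Nat.mul_le_mul_left _ ih
        _ = h^R * ((h+2) * P R) := by ring
        _ ≤ h^R * (h * P (R+1)) := Nat.mul_le_mul_left _ (hrec R)
        _ = h^(R+1) * P (R+1) := by ring
  have hP0 : 1 ≤ P 0 := by
    have hx0box : x0 ∈ M ∩ NBH.box i a b x0 0 :=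
      ⟨hx0, ⟨hslab x0 hx0, fun j hj => by simp⟩⟩
    have hne0 : (NBH.pr i '' (M ∩ NBH.box i a b x0 0)).Nonempty :=
      ⟨_, Set.mem_image_of_mem _ hx0box⟩
    exact (Set.ncard_pos (hPfin 0)).mpr hne0
  obtain ⟨m, hm1, hm⟩ := NBH.poly_lt_three_pow (2*h) (n-1)
  set R := h * m with hRdef
  have hA : (h+2)^R ≤ h^R * P R := by
    calc (h+2)^R = (h+2)^R * 1 := by ring
      _ ≤ (h+2)^R * P 0 := Nat.mul_le_mul_left _ hP0
      _ ≤ h^R * P R := hgrow R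
  have hB : h^R * P R ≤ h^R * (2*R+1)^(n-1) :=
    Nat.mul_le_mul_left _ (NBH.P_le i a b x0 R)
  have hC : (2*R+1)^(n-1) < 3^m := by
    have e : 2*R+1 = 2*h*m + 1 := by rw [hRdef]; ring
    rw [e]
    exact hm
  have hD : h^R * (2*R+1)^(n-1) < h^R * 3^m :=
    mul_lt_mul_of_pos_left hC (pow_pos (by omega) R)
  have hE : h^R * 3^m ≤ (h+2)^R := by
    calc h^R * 3^m = 3^m * h^(h*m) := by rw [hRdef]; ring
      _ ≤ (h+2)^(h*m) := NBH.iterate3 h hh1 m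
      _ = (h+2)^R := by rw [hRdef]
  exact lt_irrefl _ (lt_of_le_of_lt (hA.trans hB) (lt_of_lt_of_le hD hE))
end
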